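/- arXiv:physics/0003037 — 2 statements merged into one kernel-verified Lean document; each statement's English description precedes it below -/
import Mathlib

section
/- The crystal-spinor selection rule for deletion of C from a dinucleotide: modeling the deletion C-X → X as the component τ^{1/2}_{−1/2} ⊕ τ^{1/2}_{−1/2} acting between the sl(2)⊕sl(2) crystal representation of the dinucleotide and the fundamental (1/2,1/2), the transition is allowed in both factors (i.e., the V-component m-selection δ_{m₁,j₁−α} + δ_{−m,j−α} − δδ of the q→0 Wigner–Eckart rule is satisfied for both H and V) exactly for the dinucleotide CA, among CC, CU, CG, CA. -/
/-- The `q → 0` Wigner–Eckart selection rule for a spinor crystal tensor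
operator `τ^{1/2}_m` on one `sl(2)` factor: the transition
`|j₁, m₁⟩ → |j_f, m_f⟩` is allowed iff there is `α ∈ {0,1}` with
`j_f = j₁ + 1/2 − α`, `m_f = m₁ + m`, and `m₁ = j₁ − α` or `−m = 1/2 − α`. -/
def Allowed (j₁ m₁ jf mf m : ℚ) : Prop :=
  ∃ α : ℚ, (α = 0 ∨ α = 1) ∧ jf = j₁ + 1/2 - α ∧ mf = m₁ + m ∧
    (m₁ = j₁ - α ∨ -m = 1/2 - α)

/-- For `m = -1/2` the second selection condition `-m = 1/2 - α` holds exactly when `α = 0`. -/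
theorem allowed_lowering_iff {j₁ m₁ jf mf : ℚ} :
    Allowed j₁ m₁ jf mf (-1/2) ↔
      mf = m₁ - 1/2 ∧ (jf = j₁ + 1/2 ∨ jf = j₁ - 1/2 ∧ m₁ = j₁ - 1) := by
  constructor
  · rintro ⟨α, rfl | rfl, rfl, rfl, hsel⟩
    · exact ⟨by ring, .inl (by ring)⟩
    · refine ⟨by ring, .inr ⟨by ring, ?_⟩⟩
      rcases hsel with hm | hm
      · exact hm
      · norm_num at hm
  · rintro ⟨rfl, rfl | ⟨rfl, rfl⟩⟩
    · exact ⟨0, .inl rfl, by ring, by ring, .inr (by norm_num)⟩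
    · exact ⟨1, .inr rfl, by ring, by ring, .inl rfl⟩

/-- Modeling the deletion C-X → X by `τ^{1/2}_{−1/2,H} ⊕ τ^{1/2}_{−1/2,V}`:
among CC → C, CU → U, CG → G, CA → A (with the dinucleotides lying in the
representations (1,1), (0,1), (1,0), (0,0) with `(J_{H,3}, J_{V,3})` values
(1,1), (0,1), (1,0), (0,0), and the final nucleotides lying in (1/2,1/2) with
C = (1/2,1/2), U = (−1/2,1/2), G = (1/2,−1/2), A = (−1/2,−1/2)), the pattern is
CC: F–F, CU: A–F, CG: F–A, CA: A–A; hence only CA is allowed in both factors. -/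
theorem deletion_of_C_selection_rule :
    -- CC → C : forbidden horizontally and vertically
    (¬ Allowed 1 1 (1/2) (1/2) (-1/2)) ∧ (¬ Allowed 1 1 (1/2) (1/2) (-1/2)) ∧
    -- CU → U : allowed horizontally, forbidden vertically
    (Allowed 0 0 (1/2) (-1/2) (-1/2)) ∧ (¬ Allowed 1 1 (1/2) (1/2) (-1/2)) ∧
    -- CG → G : forbidden horizontally, allowed vertically
    (¬ Allowed 1 1 (1/2) (1/2) (-1/2)) ∧ (Allowed 0 0 (1/2) (-1/2) (-1/2)) ∧
    -- CA → A : allowed horizontally and vertically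
    (Allowed 0 0 (1/2) (-1/2) (-1/2)) ∧ (Allowed 0 0 (1/2) (-1/2) (-1/2)) := by
  have allowed : Allowed 0 0 (1/2) (-1/2) (-1/2) :=
    allowed_lowering_iff.2 ⟨by norm_num, .inl (by norm_num)⟩
  have forbidden : ¬ Allowed 1 1 (1/2) (1/2) (-1/2) := by
    rw [allowed_lowering_iff]
    norm_num
  exact ⟨forbidden, forbidden, allowed, forbidden, forbidden, allowed, allowed, allowed⟩
end

section
/- Under the deletion rule for U modeled by τ^{1/2}_{+1/2,H} ⊕ τ^{1/2}_{−1/2,V}, among the dinucleotides UC, UU, UG, UA the transitions UC→C and UU→U are allowed horizontally but forbidden vertically, while UG→G and UA→A are allowed in both components; hence U can be (fully) deleted exactly when followed by a purine. -/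
namespace Allowed

variable {j₁ m₁ jf mf m : ℚ}

theorem raise (hj : jf = j₁ + 1/2) (hm : mf = m₁ + m) (h : m₁ = j₁ ∨ m = -1/2) :
    Allowed j₁ m₁ jf mf m :=
  ⟨0, .inl rfl, by rw [hj, sub_zero], hm, by rcases h with h | h <;> [left; right] <;> linarith⟩

theorem lower (hj : jf = j₁ - 1/2) (hm : mf = m₁ + m) (h : m₁ = j₁ - 1 ∨ m = 1/2) :
    Allowed j₁ m₁ jf mf m :=
  ⟨1, .inr rfl, by linarith, hm, by rcases h with h | h <;> [left; right] <;> linarith⟩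

end Allowed

theorem not_allowed_lower_of_highest_weight {j jf : ℚ} (mf : ℚ) (hjf : jf = j - 1/2) :
    ¬ Allowed j j jf mf (-1/2) := by
  rintro ⟨α, rfl | rfl, hj, -, h⟩
  · linarith
  · rcases h with h | h <;> linarith

/-- Modeling the deletion of U by `τ^{1/2}_{+1/2,H} ⊕ τ^{1/2}_{−1/2,V}`:
among UC → C, UU → U, UG → G, UA → A (with UC, UU in (1,1) with
`(J_{H,3}, J_{V,3}) = (0,1), (−1,1)` and UG, UA in (1,0) with `(0,0), (−1,0)`,
the final nucleotides lying in (1/2,1/2) with C = (1/2,1/2), U = (−1/2,1/2),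
G = (1/2,−1/2), A = (−1/2,−1/2)), the transitions UC → C and UU → U are allowed
horizontally but forbidden vertically, while UG → G and UA → A are allowed in
both components: U can be fully deleted exactly when followed by a purine. -/
theorem deletion_of_U_selection_rule :
    -- UC → C : allowed horizontally, forbidden vertically
    (Allowed 1 0 (1/2) (1/2) (1/2)) ∧ (¬ Allowed 1 1 (1/2) (1/2) (-1/2)) ∧
    -- UU → U : allowed horizontally, forbidden vertically
    (Allowed 1 (-1) (1/2) (-1/2) (1/2)) ∧ (¬ Allowed 1 1 (1/2) (1/2) (-1/2)) ∧
    -- UG → G : allowed horizontally and vertically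
    (Allowed 1 0 (1/2) (1/2) (1/2)) ∧ (Allowed 0 0 (1/2) (-1/2) (-1/2)) ∧
    -- UA → A : allowed horizontally and vertically
    (Allowed 1 (-1) (1/2) (-1/2) (1/2)) ∧ (Allowed 0 0 (1/2) (-1/2) (-1/2)) := by
  have hC : Allowed 1 0 (1/2) (1/2) (1/2) := .lower (by norm_num) (by norm_num) (.inr rfl)
  have hU : Allowed 1 (-1) (1/2) (-1/2) (1/2) := .lower (by norm_num) (by norm_num) (.inr rfl)
  have hPyrimidineV : ¬ Allowed 1 1 (1/2) (1/2) (-1/2) :=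
    not_allowed_lower_of_highest_weight _ (by norm_num)
  have hPurineV : Allowed 0 0 (1/2) (-1/2) (-1/2) := .raise (by norm_num) (by norm_num) (.inl rfl)
  exact ⟨hC, hPyrimidineV, hU, hPyrimidineV, hC, hPurineV, hU, hPurineV⟩
end
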